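/- Let G be a finite simple graph, k ≥ 1, and let w : ℕ → ℝ be 1-concave with w(2) − w(1) < 1. Let G' be obtained from G by adding k new vertices adjacent to all vertices of G and pairwise non-adjacent, let δ be the maximum degree of G', and let E be the election whose candidates are the vertices of G' with one voter approving {u,v} for each edge {u,v} of G' and δ − d(v) voters approving {v} for each vertex v of G'. Then the winning size-k committees of E under the w-Thiele rule are exactly the size-k independent sets of G'; in particular, E has a unique winning size-k committee if and only if G has no size-k independent set. -/

import Mathlib

open Finset

/-- The `w`-score of a committee `S`. -/
def wScore {C V : Type} [DecidableEq C] [Fintype V]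
    (w : ℕ → ℝ) (A : V → Finset C) (S : Finset C) : ℝ :=
  ∑ v : V, w ((A v ∩ S).card)

/-- A finite set of vertices is independent: no two of its members are adjacent. -/
def IsIndepFinset {α : Type} (G : SimpleGraph α) (S : Finset α) : Prop :=
  ∀ u ∈ S, ∀ v ∈ S, ¬ G.Adj u v

/-- The graph `G'` obtained from `G` by adding `k` new vertices, each adjacent to
every old vertex, with the new vertices pairwise non-adjacent. -/
def extGraph {α : Type} (G : SimpleGraph α) (k : ℕ) : SimpleGraph (α ⊕ Fin k) where
  Adj x y :=
    match x, y with
    | .inl u, .inl v => G.Adj u v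
    | .inl _, .inr _ => True
    | .inr _, .inl _ => True
    | .inr _, .inr _ => False
  symm := by
    constructor
    intro x y h
    cases x <;> cases y <;> simp_all
    exact h.symm
  loopless := by
    constructor
    intro x
    cases x <;> simp

instance {α : Type} (G : SimpleGraph α) [DecidableRel G.Adj] (k : ℕ) :
    DecidableRel (extGraph G k).Adj
  | .inl u, .inl v => decidable_of_iff (G.Adj u v) Iff.rfl
  | .inl _, .inr _ => .isTrue trivial
  | .inr _, .inl _ => .isTrue trivial
  | .inr _, .inr _ => .isFalse id

/-- The voters of the election built from a graph `H` with degree bound `δ`: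
one voter per edge, and `δ - d(v)` voters per vertex `v`. -/
abbrev GraphVoter {α : Type} [Fintype α] [DecidableEq α]
    (H : SimpleGraph α) [DecidableRel H.Adj] (δ : ℕ) : Type :=
  ↥H.edgeFinset ⊕ (Σ v : α, Fin (δ - H.degree v))

/-- The approval sets: the voter of edge `{u,v}` approves exactly `{u,v}`; each of the
`δ - d(v)` voters of vertex `v` approves exactly `{v}`. -/
def graphApproval {α : Type} [Fintype α] [DecidableEq α]
    (H : SimpleGraph α) [DecidableRel H.Adj] (δ : ℕ) :
    GraphVoter H δ → Finset α
  | .inl e => Finset.univ.filter (fun x => x ∈ (e : Sym2 α))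
  | .inr ⟨v, _⟩ => {v}

/-!
With `w 0 = 0` and `w 1 = 1`, a voter approving at most two candidates contributes
`|A(v) ∩ S|` to the score, minus `2 - w 2` when both of its candidates lie in `S`. Each vertex
of `S` is approved by `d(v)` edge voters and `δ - d(v)` vertex voters, so
`score S = δ |S| - (2 - w 2) · #(edges inside S)`. As `w 2 < 2` and the new vertices form an
independent `k`-set, the winners are exactly the independent `k`-sets. These are the set of new
vertices and the independent `k`-sets of `G`, so the winner is unique iff `G` has none.
-/

lemma apply_eq_add_ite_of_le_two {w : ℕ → ℝ} (hw0 : w 0 = 0) (hw1 : w 1 = 1) {n : ℕ}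
    (hn : n ≤ 2) : w n = n + if n = 2 then w 2 - 2 else 0 := by
  interval_cases n <;> simp [hw0, hw1]

namespace Sym2

variable {α : Type} [DecidableEq α]

lemma filter_mem_eq_toFinset_filter (S : Finset α) (e : Sym2 α) :
    S.filter (· ∈ e) = e.toFinset.filter (· ∈ S) := by
  ext; simp [and_comm]

lemma card_filter_mem_le_two (S : Finset α) (e : Sym2 α) : #(S.filter (· ∈ e)) ≤ 2 := by
  rw [filter_mem_eq_toFinset_filter]
  exact (card_filter_le _ _).trans (by rw [card_toFinset]; split_ifs <;> omega)

lemma card_filter_mem_eq_two_iff {e : Sym2 α} (he : ¬e.IsDiag) {S : Finset α} :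
    #(S.filter (· ∈ e)) = 2 ↔ e ∈ S.sym2 := by
  rw [filter_mem_eq_toFinset_filter, ← card_toFinset_of_not_isDiag e he, card_filter_eq_iff,
    mem_sym2_iff]
  simp only [mem_toFinset]

end Sym2

namespace SimpleGraph

variable {α : Type} [Fintype α] [DecidableEq α] (H : SimpleGraph α) [DecidableRel H.Adj]

lemma sum_card_filter_mem_edgeFinset (S : Finset α) :
    ∑ e ∈ H.edgeFinset, #(S.filter (· ∈ e)) = ∑ v ∈ S, H.degree v := by
  refine (sum_card_bipartiteAbove_eq_sum_card_bipartiteBelow (fun e v => v ∈ e)).trans ?_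
  refine sum_congr rfl fun v _ => ?_
  rw [bipartiteBelow, ← incidenceFinset_eq_filter, card_incidenceFinset_eq_degree]

lemma edgeFinset_inter_sym2_eq_empty_iff (S : Finset α) :
    H.edgeFinset ∩ S.sym2 = ∅ ↔ IsIndepFinset H S := by
  simp only [eq_empty_iff_forall_notMem, mem_inter, not_and, IsIndepFinset]
  constructor
  · intro h u hu v hv huv
    exact h s(u, v) (mem_edgeFinset.2 huv) (mk_mem_sym2_iff.2 ⟨hu, hv⟩)
  · intro h e
    induction e with
    | _ u v =>
      rw [mem_edgeFinset, mem_edgeSet, mk_mem_sym2_iff]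
      exact fun huv ⟨hu, hv⟩ => h u hu v hv huv

variable {w : ℕ → ℝ} (δ : ℕ) (S : Finset α)

lemma sum_edgeVoter_score (hw0 : w 0 = 0) (hw1 : w 1 = 1) :
    ∑ e : H.edgeFinset, w #(graphApproval H δ (.inl e) ∩ S)
      = ∑ v ∈ S, (H.degree v : ℝ) + #(H.edgeFinset ∩ S.sym2) * (w 2 - 2) := by
  have hA : ∀ e : H.edgeFinset, graphApproval H δ (.inl e) ∩ S = S.filter (· ∈ (e : Sym2 α)) := by
    intro e; ext; simp [graphApproval, and_comm]
  have hedge : ∀ e ∈ H.edgeFinset, w #(S.filter (· ∈ e))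
      = #(S.filter (· ∈ e)) + if e ∈ S.sym2 then w 2 - 2 else 0 := by
    intro e he
    simp only [apply_eq_add_ite_of_le_two hw0 hw1 (Sym2.card_filter_mem_le_two S e),
      Sym2.card_filter_mem_eq_two_iff (not_isDiag_of_mem_edgeFinset he)]
  simp only [hA]
  rw [sum_coe_sort H.edgeFinset (fun e => w #(S.filter (· ∈ e))), sum_congr rfl hedge,
    sum_add_distrib, sum_ite_mem, sum_const, nsmul_eq_mul]
  congr 1
  exact_mod_cast sum_card_filter_mem_edgeFinset H S

lemma sum_vertexVoter_score (hδ : ∀ v, H.degree v ≤ δ) (hw0 : w 0 = 0) (hw1 : w 1 = 1) :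
    ∑ x : (Σ v, Fin (δ - H.degree v)), w #(graphApproval H δ (.inr x) ∩ S)
      = ∑ v ∈ S, ((δ : ℝ) - H.degree v) := by
  have hvertex : ∀ v, ∑ i : Fin (δ - H.degree v), w #(graphApproval H δ (.inr ⟨v, i⟩) ∩ S)
      = if v ∈ S then (δ : ℝ) - H.degree v else 0 := by
    intro v
    by_cases hv : v ∈ S <;>
      simp [graphApproval, singleton_inter_of_mem, singleton_inter_of_notMem, hv, hw0, hw1,
        Nat.cast_sub (hδ v)]
  rw [Fintype.sum_sigma, sum_congr rfl fun v _ => hvertex v, sum_ite_mem, univ_inter]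

lemma wScore_graphApproval (hδ : ∀ v, H.degree v ≤ δ) (hw0 : w 0 = 0) (hw1 : w 1 = 1) :
    wScore w (graphApproval H δ) S = δ * #S + #(H.edgeFinset ∩ S.sym2) * (w 2 - 2) := by
  rw [wScore, Fintype.sum_sum_type, sum_edgeVoter_score H δ S hw0 hw1,
    sum_vertexVoter_score H δ S hδ hw0 hw1, sum_sub_distrib, sum_const, nsmul_eq_mul]
  ring

theorem forall_wScore_le_iff_isIndepFinset (hδ : ∀ v, H.degree v ≤ δ) (hw0 : w 0 = 0)
    (hw1 : w 1 = 1) (hw2 : w 2 < 2) {k : ℕ} {S₀ : Finset α} (hS₀ : #S₀ = k)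
    (hS₀indep : IsIndepFinset H S₀) {S : Finset α} (hS : #S = k) :
    (∀ S' : Finset α, #S' = k → wScore w (graphApproval H δ) S' ≤ wScore w (graphApproval H δ) S)
      ↔ IsIndepFinset H S := by
  have hscore : ∀ T : Finset α, #T = k →
      wScore w (graphApproval H δ) T = δ * k + #(H.edgeFinset ∩ T.sym2) * (w 2 - 2) := by
    intro T hT
    rw [wScore_graphApproval H δ T hδ hw0 hw1, hT]
  rw [← edgeFinset_inter_sym2_eq_empty_iff, ← card_eq_zero] at hS₀indep ⊢
  constructor
  · intro hmax
    have h := hmax S₀ hS₀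
    rw [hscore S₀ hS₀, hscore S hS, hS₀indep, Nat.cast_zero, zero_mul] at h
    by_contra hne
    have : (1 : ℝ) ≤ #(H.edgeFinset ∩ S.sym2) := by exact_mod_cast Nat.one_le_iff_ne_zero.2 hne
    nlinarith
  · intro hempty S' hS'
    rw [hscore S' hS', hscore S hS, hempty, Nat.cast_zero, zero_mul]
    have : (0 : ℝ) ≤ #(H.edgeFinset ∩ S'.sym2) := Nat.cast_nonneg _
    nlinarith

end SimpleGraph

section extGraph

variable {α : Type} (G : SimpleGraph α) {k : ℕ}

lemma isIndepFinset_extGraph_map_inl {T : Finset α} (hT : IsIndepFinset G T) :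
    IsIndepFinset (extGraph G k) (T.map .inl) := by
  simp only [IsIndepFinset, mem_map, Function.Embedding.inl_apply]
  rintro _ ⟨u, hu, rfl⟩ _ ⟨v, hv, rfl⟩
  exact hT u hu v hv

lemma isIndepFinset_extGraph_map_inr (T : Finset (Fin k)) :
    IsIndepFinset (extGraph G k) (T.map .inr) := by
  simp only [IsIndepFinset, mem_map, Function.Embedding.inr_apply]
  rintro _ ⟨i, -, rfl⟩ _ ⟨j, -, rfl⟩
  exact id

lemma IsIndepFinset.of_extGraph {S : Finset (α ⊕ Fin k)} (h : IsIndepFinset (extGraph G k) S) :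
    S.toLeft = ∅ ∨ S.toRight = ∅ ∧ IsIndepFinset G S.toLeft := by
  rcases S.toLeft.eq_empty_or_nonempty with hl | ⟨a, ha⟩
  · exact .inl hl
  refine .inr ⟨eq_empty_of_forall_notMem fun i hi => ?_, fun u hu v hv => ?_⟩
  · exact h _ (mem_toLeft.1 ha) _ (mem_toRight.1 hi) trivial
  · exact h _ (mem_toLeft.1 hu) _ (mem_toLeft.1 hv)

theorem existsUnique_isIndepFinset_extGraph_iff (hk : 1 ≤ k) :
    (∃! S : Finset (α ⊕ Fin k), #S = k ∧ IsIndepFinset (extGraph G k) S)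
      ↔ ¬∃ T : Finset α, #T = k ∧ IsIndepFinset G T := by
  have hnew : #((univ : Finset (Fin k)).map .inr : Finset (α ⊕ Fin k)) = k := by simp
  constructor
  · rintro ⟨S, -, huniq⟩ ⟨T, hT, hTindep⟩
    have hS_new := huniq _ ⟨hnew, isIndepFinset_extGraph_map_inr G univ⟩
    have hS_old := huniq _ ⟨by rwa [card_map], isIndepFinset_extGraph_map_inl G hTindep⟩
    have : (.inr ⟨0, hk⟩ : α ⊕ Fin k) ∈ T.map .inl := by rw [hS_old, ← hS_new]; simp
    simp at this
  · intro hno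
    refine ⟨univ.map .inr, ⟨hnew, isIndepFinset_extGraph_map_inr G univ⟩, ?_⟩
    rintro S ⟨hS, hSindep⟩
    rcases hSindep.of_extGraph with hl | ⟨hr, hlindep⟩
    · exact eq_of_subset_of_card_le (subset_map_inr.2 ⟨hl, subset_univ _⟩) (by rw [hS, hnew])
    · refine absurd ⟨S.toLeft, ?_, hlindep⟩ hno
      rw [← card_toLeft_add_card_toRight, hr, card_empty, add_zero] at hS
      exact hS

end extGraph

theorem stmt2_general {α : Type} [Fintype α] [DecidableEq α]
    (G : SimpleGraph α) [DecidableRel G.Adj] (k : ℕ) (hk : 1 ≤ k)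
    (w : ℕ → ℝ) (hw0 : w 0 = 0) (hw1 : w 1 = 1)
    (hx : w 2 - w 1 < 1) (δ : ℕ)
    (hδ : ∀ v : α ⊕ Fin k, (extGraph G k).degree v ≤ δ) :
    (∀ S : Finset (α ⊕ Fin k), S.card = k →
      ((∀ S' : Finset (α ⊕ Fin k), S'.card = k →
          wScore w (graphApproval (extGraph G k) δ) S'
            ≤ wScore w (graphApproval (extGraph G k) δ) S)
        ↔ IsIndepFinset (extGraph G k) S))
    ∧ ((∃! S : Finset (α ⊕ Fin k), S.card = k ∧
          ∀ S' : Finset (α ⊕ Fin k), S'.card = k →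
            wScore w (graphApproval (extGraph G k) δ) S'
              ≤ wScore w (graphApproval (extGraph G k) δ) S)
        ↔ ¬ ∃ T : Finset α, T.card = k ∧ IsIndepFinset G T) := by
  have hwin := fun (S : Finset (α ⊕ Fin k)) (hS : S.card = k) =>
    SimpleGraph.forall_wScore_le_iff_isIndepFinset _ δ hδ hw0 hw1 (by linarith)
      (by simp) (isIndepFinset_extGraph_map_inr G univ) hS
  refine ⟨hwin, ?_⟩
  rw [← existsUnique_isIndepFinset_extGraph_iff G hk]
  exact existsUnique_congr fun S => and_congr_right (hwin S)

theorem stmt2 {α : Type} [Fintype α] [DecidableEq α]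
    (G : SimpleGraph α) [DecidableRel G.Adj] (k : ℕ) (hk : 1 ≤ k)
    (w : ℕ → ℝ) (hw0 : w 0 = 0) (hw1 : w 1 = 1) (hmono : Monotone w)
    (hconc : ∀ i : ℕ, 1 ≤ i → w i - w (i - 1) ≥ w (i + 1) - w i)
    (hx : w 2 - w 1 < 1) (δ : ℕ)
    (hδ : ∀ v : α ⊕ Fin k, (extGraph G k).degree v ≤ δ) :
    (∀ S : Finset (α ⊕ Fin k), S.card = k →
      ((∀ S' : Finset (α ⊕ Fin k), S'.card = k →
          wScore w (graphApproval (extGraph G k) δ) S'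
            ≤ wScore w (graphApproval (extGraph G k) δ) S)
        ↔ IsIndepFinset (extGraph G k) S))
    ∧ ((∃! S : Finset (α ⊕ Fin k), S.card = k ∧
          ∀ S' : Finset (α ⊕ Fin k), S'.card = k →
            wScore w (graphApproval (extGraph G k) δ) S'
              ≤ wScore w (graphApproval (extGraph G k) δ) S)
        ↔ ¬ ∃ T : Finset α, T.card = k ∧ IsIndepFinset G T) :=
  stmt2_general G k hk w hw0 hw1 hx δ hδ
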